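/- arXiv:math/9201288 — 3 statements merged into one kernel-verified Lean document; each statement's English description precedes it below -/
import Mathlib

section
/- Let {f_ε}_{0≤ε≤ε₀} be a good family. Then for every 0 < ε ≤ ε₀ the scaling function s_ε of f_ε exists and is Hölder continuous on the dual Cantor set C*, and for every 0 < ε₁ ≤ ε₀ the functions s_ε converge to s_{ε₁} uniformly on C* as ε tends to ε₁. -/
open Set MeasureTheory Filter Topology

noncomputable def len (s : Set ℝ) : ℝ := (volume s).toReal

noncomputable def branch (f : ℝ → ℝ) : Bool → ℝ → ℝ
  | false => Function.invFunOn f (Icc (-1) 0)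
  | true => Function.invFunOn f (Icc 0 1)

noncomputable def gw (f : ℝ → ℝ) : List Bool → ℝ → ℝ
  | [] => id
  | b :: w => branch f b ∘ gw f w

noncomputable def Iw (f : ℝ → ℝ) (w : List Bool) : Set ℝ := gw f w '' Icc (-1) 1

def word (a : ℕ → Bool) (n : ℕ) : List Bool := ((List.range (n + 1)).reverse).map a

noncomputable def ratio (f : ℝ → ℝ) (a : ℕ → Bool) (n : ℕ) : ℝ :=
  len (Iw f (word a n)) / len (Iw f ((word a n).dropLast))

def IsScalingFun (f : ℝ → ℝ) (s : (ℕ → Bool) → ℝ) : Prop :=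
  ∀ a : ℕ → Bool, Tendsto (ratio f a) atTop (nhds (s a))

def HolderOnDual (s : (ℕ → Bool) → ℝ) : Prop :=
  ∃ C > (0:ℝ), ∃ lam ∈ Ioo (0:ℝ) 1, ∀ a b : ℕ → Bool, ∀ n : ℕ,
    (∀ k < n, a k = b k) → |s a - s b| ≤ C * lam ^ n

def EvZero (a : ℕ → Bool) : Prop := ∃ N, ∀ n ≥ N, a n = false

def Lambda (f : ℝ → ℝ) : Set ℝ := {x | ∀ n : ℕ, f^[n] x ∈ Icc (-1) 1}

structure GoodFamily where
  eps0 : ℝ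
  eps0_pos : 0 < eps0
  f : ℝ → ℝ → ℝ
  f' : ℝ → ℝ → ℝ
  gamma : ℝ
  one_lt_gamma : 1 < gamma
  mono : ∀ ε ∈ Icc 0 eps0, StrictMonoOn (f ε) (Icc (-1) 0)
  anti : ∀ ε ∈ Icc 0 eps0, StrictAntiOn (f ε) (Icc 0 1)
  map_neg_one : ∀ ε ∈ Icc 0 eps0, f ε (-1) = -1
  map_one : ∀ ε ∈ Icc 0 eps0, f ε 1 = -1
  map_zero : ∀ ε ∈ Icc 0 eps0, f ε 0 = 1 + ε
  smooth : ContDiffOn ℝ 1 (fun p : ℝ × ℝ => f p.1 p.2) (Icc 0 eps0 ×ˢ Icc (-1) 1)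
  deriv_f : ∀ ε ∈ Icc 0 eps0, ∀ x ∈ Icc (-1:ℝ) 1,
    HasDerivWithinAt (f ε) (f' ε x) (Icc (-1) 1) x
  Rneg : ℝ → ℝ → ℝ
  Rpos : ℝ → ℝ → ℝ
  Rneg_cont : ContinuousOn (fun p : ℝ × ℝ => Rneg p.1 p.2) (Icc 0 eps0 ×ˢ Icc (-1) 0)
  Rpos_cont : ContinuousOn (fun p : ℝ × ℝ => Rpos p.1 p.2) (Icc 0 eps0 ×ˢ Icc 0 1)
  Rneg_ne : ∀ ε ∈ Icc 0 eps0, ∀ x ∈ Icc (-1:ℝ) 0, Rneg ε x ≠ 0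
  Rpos_ne : ∀ ε ∈ Icc 0 eps0, ∀ x ∈ Icc (0:ℝ) 1, Rpos ε x ≠ 0
  Rneg_eq : ∀ ε ∈ Icc 0 eps0, ∀ x ∈ Ico (-1:ℝ) 0, Rneg ε x = f' ε x / |x| ^ (gamma - 1)
  Rpos_eq : ∀ ε ∈ Icc 0 eps0, ∀ x ∈ Ioc (0:ℝ) 1, Rpos ε x = f' ε x / |x| ^ (gamma - 1)
  K' : ℝ
  K'_pos : 0 < K'
  alpha' : ℝ
  alpha'_mem : alpha' ∈ Ioc (0:ℝ) 1
  holder' : ∀ ε ∈ Icc 0 eps0, ∀ x ∈ Icc (-1:ℝ) 1, ∀ y ∈ Icc (-1:ℝ) 1,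
    |f' ε x - f' ε y| ≤ K' * |x - y| ^ alpha'
  K'' : ℝ
  K''_pos : 0 < K''
  alpha'' : ℝ
  alpha''_mem : alpha'' ∈ Ioc (0:ℝ) 1
  holder''_neg : ∀ ε ∈ Icc 0 eps0, ∀ x ∈ Ico (-1:ℝ) 0, ∀ y ∈ Ico (-1:ℝ) 0,
    |f' ε x / |x| ^ (gamma - 1) - f' ε y / |y| ^ (gamma - 1)| ≤ K'' * |x - y| ^ alpha''
  holder''_pos : ∀ ε ∈ Icc 0 eps0, ∀ x ∈ Ioc (0:ℝ) 1, ∀ y ∈ Ioc (0:ℝ) 1,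
    |f' ε x / |x| ^ (gamma - 1) - f' ε y / |y| ^ (gamma - 1)| ≤ K'' * |x - y| ^ alpha''
  C0 : ℝ
  C0_pos : 0 < C0
  lam : ℝ
  lam_mem : lam ∈ Ioo (0:ℝ) 1
  decay : ∀ ε ∈ Icc 0 eps0, ∀ n : ℕ, 1 ≤ n → ∀ w : List Bool, w.length = n + 1 →
    len (Iw (f ε) w) ≤ C0 * lam ^ n

/-!
For `ε > 0` the critical value `1 + ε` exceeds `1`, so every interval `I_{iw}` lies in the compact
set `{x | f_ε x ≤ 1}`, which avoids the critical point; there `|f_ε'| ≥ c > 0`, with `c` locally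
uniform in `ε` because `r_ε` is continuous and nonvanishing. By the mean value theorem and the
Hölder continuity of `f_ε'`, passing from `s(wₙ)` to `s(wₙ₊₁)` changes the ratio by at most
`(K' / c) |I|^{α'} ≤ C (λ^{α'})ⁿ`. Hence the ratios converge geometrically, uniformly in the word
and locally uniformly in `ε`. Since `s(wₙ)` only depends on the first `n + 1` symbols this gives
Hölder continuity, and since each finite-level ratio is continuous in `ε` (the inverse branches
depend continuously on `ε` by compactness) it gives uniform convergence of `s_ε` as `ε → ε₁`.
-/

open Function

lemma IsCompact.continuousOn_of_rightInvOn {X Y : Type*} [TopologicalSpace X]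
    [TopologicalSpace Y] [T2Space Y] {K : Set X} {D : Set Y} {Φ : X → Y} {g : Y → X}
    (hK : IsCompact K) (hΦ : ContinuousOn Φ K) (hinj : InjOn Φ K) (hg : MapsTo g D K)
    (hgΦ : RightInvOn g Φ D) : ContinuousOn g D := by
  -- every cluster point `x ∈ K` of `g` at `y` satisfies `Φ x = y`, hence `x = g y`
  intro y hy
  refine hK.tendsto_nhds_of_unique_mapClusterPt (eventually_mem_nhdsWithin.mono hg)
    fun x hx hcl => hinj hx (hg hy) ?_
  have hcomp : MapClusterPt (Φ x) (𝓝[D] y) (Φ ∘ g) := by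
    refine hcl.tendsto_comp' ((hΦ x hx).tendsto.mono_left ?_)
    exact le_inf inf_le_left (inf_le_right.trans (tendsto_principal.2
      (eventually_mem_nhdsWithin.mono hg)))
  have hid : Tendsto (Φ ∘ g) (𝓝[D] y) (𝓝 y) :=
    tendsto_nhdsWithin_of_tendsto_nhds tendsto_id |>.congr' <|
      eventually_mem_nhdsWithin.mono fun z hz => (hgΦ hz).symm
  rw [hgΦ hy]
  exact eq_of_nhds_neBot (hcomp.clusterPt.neBot.mono (inf_le_inf_left _ hid))

lemma exists_mem_uIcc_sub_eq_mul {f f' : ℝ → ℝ} {s : Set ℝ} (hs : s.OrdConnected)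
    (hd : ∀ x ∈ s, HasDerivWithinAt f (f' x) s x) {x y : ℝ} (hx : x ∈ s) (hy : y ∈ s) :
    ∃ ξ ∈ uIcc x y, f y - f x = f' ξ * (y - x) := by
  wlog hxy : x < y generalizing x y
  · rcases (not_lt.1 hxy).eq_or_lt with rfl | hyx
    · exact ⟨_, left_mem_uIcc, by ring⟩
    · obtain ⟨ξ, hξ, h⟩ := this hy hx hyx
      exact ⟨ξ, uIcc_comm x y ▸ hξ, by linarith⟩
  have hsub : Icc x y ⊆ s := hs.out hx hy
  obtain ⟨ξ, hξ, h⟩ := exists_hasDerivAt_eq_slope f f' hxy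
    (fun z hz => (hd z (hsub hz)).continuousWithinAt.mono hsub)
    (fun z hz => (hd z (hsub (Ioo_subset_Icc_self hz))).hasDerivAt
      (mem_of_superset (Icc_mem_nhds hz.1 hz.2) hsub))
  refine ⟨ξ, uIcc_of_le hxy.le ▸ Ioo_subset_Icc_self hξ, ?_⟩
  rw [h, div_mul_cancel₀ _ (sub_ne_zero.2 hxy.ne')]

lemma abs_div_sub_abs_mul_div_le {A B X Y c : ℝ} (hA : 0 ≤ A) (hAB : A ≤ B) (hB : 0 < B)
    (hc : 0 < c) (hY : c ≤ |Y|) : |A / B - |X| * A / (|Y| * B)| ≤ |Y - X| / c := by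
  have hY0 : 0 < |Y| := hc.trans_le hY
  have hsplit : A / B - |X| * A / (|Y| * B) = A / B * ((|Y| - |X|) / |Y|) := by
    field_simp
  rw [hsplit, abs_mul, abs_div (|Y| - |X|), abs_of_pos hY0]
  calc |A / B| * (|(|Y| - |X|)| / |Y|) ≤ 1 * (|Y - X| / c) := by
        refine mul_le_mul ?_ ?_ (by positivity) zero_le_one
        · rw [abs_of_nonneg (div_nonneg hA hB.le), div_le_one hB]; exact hAB
        · exact div_le_div₀ (abs_nonneg _) (abs_abs_sub_abs_le_abs_sub Y X) hc hY
    _ = |Y - X| / c := one_mul _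

lemma len_uIcc (p q : ℝ) : len (uIcc p q) = |q - p| := by
  rw [len, Real.volume_interval, ENNReal.toReal_ofReal (abs_nonneg _)]

lemma len_mono {s t : Set ℝ} (hst : s ⊆ t) (ht : t ⊆ Icc (-1) 1) : len s ≤ len t :=
  measureReal_mono hst ((measure_mono ht).trans_lt measure_Icc_lt_top).ne

lemma Iw_cons (f : ℝ → ℝ) (b : Bool) (w : List Bool) :
    Iw f (b :: w) = branch f b '' Iw f w := by
  rw [Iw, Iw, gw, image_comp]

lemma gw_append (f : ℝ → ℝ) (v w : List Bool) : gw f (v ++ w) = gw f v ∘ gw f w := by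
  induction v with
  | nil => rfl
  | cons b v ih => rw [List.cons_append, gw, gw, ih, comp_assoc]

lemma word_length (a : ℕ → Bool) (n : ℕ) : (word a n).length = n + 1 := by
  simp [word]

lemma word_succ (a : ℕ → Bool) (n : ℕ) : word a (n + 1) = a (n + 1) :: word a n := by
  simp [word, List.range_succ]

lemma dropLast_word_succ (a : ℕ → Bool) (n : ℕ) :
    (word a (n + 1)).dropLast = a (n + 1) :: (word a n).dropLast := by
  rw [word_succ, List.dropLast_cons_of_ne_nil]
  exact List.ne_nil_of_length_eq_add_one (word_length a n)

lemma ratio_congr (f : ℝ → ℝ) {a b : ℕ → Bool} {n : ℕ} (hab : ∀ k ≤ n, a k = b k) :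
    ratio f a n = ratio f b n := by
  have : word a n = word b n := List.map_congr_left fun k hk => by
    simp only [List.mem_reverse, List.mem_range] at hk
    exact hab k (Nat.lt_succ_iff.mp hk)
  rw [ratio, ratio, this]

def half : Bool → Set ℝ
  | false => Icc (-1) 0
  | true => Icc 0 1

lemma half_subset (b : Bool) : half b ⊆ Icc (-1) 1 := by
  cases b
  · exact Icc_subset_Icc le_rfl zero_le_one
  · exact Icc_subset_Icc (by norm_num) le_rfl

lemma isCompact_half (b : Bool) : IsCompact (half b) := by
  cases b <;> exact isCompact_Icc

lemma ordConnected_half (b : Bool) : (half b).OrdConnected := by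
  cases b <;> exact ordConnected_Icc

lemma branch_eq_invFunOn (f : ℝ → ℝ) (b : Bool) : branch f b = invFunOn f (half b) := by
  cases b <;> rfl

structure IsUnimodal (f : ℝ → ℝ) : Prop where
  continuousOn : ContinuousOn f (Icc (-1) 1)
  strictMonoOn : StrictMonoOn f (Icc (-1) 0)
  strictAntiOn : StrictAntiOn f (Icc 0 1)
  map_neg_one : f (-1) = -1
  map_one : f 1 = -1
  one_le_map_zero : 1 ≤ f 0

namespace IsUnimodal

variable {f : ℝ → ℝ} (hf : IsUnimodal f) (b : Bool)
include hf

lemma surjOn_half : SurjOn f (half b) (Icc (-1) 1) := by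
  intro y hy
  have hy' : y ∈ Icc (-1) (f 0) := ⟨hy.1, hy.2.trans hf.one_le_map_zero⟩
  cases b
  · have := intermediate_value_Icc (by norm_num) (hf.continuousOn.mono (half_subset false))
    exact this (by rwa [hf.map_neg_one])
  · have := intermediate_value_Icc' zero_le_one (hf.continuousOn.mono (half_subset true))
    exact this (by rwa [hf.map_one])

lemma injOn_half : InjOn f (half b) := by
  cases b
  · exact hf.strictMonoOn.injOn
  · exact hf.strictAntiOn.injOn

lemma map_mem_uIcc_iff {x u v : ℝ} (hx : x ∈ half b) (hu : u ∈ half b) (hv : v ∈ half b) :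
    f x ∈ uIcc (f u) (f v) ↔ x ∈ uIcc u v := by
  cases b
  · simp only [mem_uIcc, hf.strictMonoOn.le_iff_le hu hx, hf.strictMonoOn.le_iff_le hx hv,
      hf.strictMonoOn.le_iff_le hv hx, hf.strictMonoOn.le_iff_le hx hu]
  · simp only [mem_uIcc, hf.strictAntiOn.le_iff_ge hu hx, hf.strictAntiOn.le_iff_ge hx hv,
      hf.strictAntiOn.le_iff_ge hv hx, hf.strictAntiOn.le_iff_ge hx hu]
    tauto

lemma branch_mem {y : ℝ} (hy : y ∈ Icc (-1) 1) : branch f b y ∈ half b := by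
  rw [branch_eq_invFunOn]
  exact (hf.surjOn_half b).mapsTo_invFunOn hy

lemma map_branch {y : ℝ} (hy : y ∈ Icc (-1) 1) : f (branch f b y) = y := by
  rw [branch_eq_invFunOn]
  exact (hf.surjOn_half b).rightInvOn_invFunOn hy

lemma injOn_branch : InjOn (branch f b) (Icc (-1) 1) :=
  fun _ hx _ hy h => by rw [← hf.map_branch b hx, ← hf.map_branch b hy, h]

lemma image_branch {S : Set ℝ} (hS : S ⊆ Icc (-1) 1) :
    branch f b '' S = half b ∩ f ⁻¹' S := by
  ext x
  constructor
  · rintro ⟨y, hy, rfl⟩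
    exact ⟨hf.branch_mem b (hS hy), by rwa [mem_preimage, hf.map_branch b (hS hy)]⟩
  · rintro ⟨hx, hfx⟩
    refine ⟨f x, hfx, hf.injOn_half b (hf.branch_mem b (hS hfx)) hx ?_⟩
    exact hf.map_branch b (hS hfx)

lemma image_branch_uIcc {p q : ℝ} (hp : p ∈ Icc (-1) 1) (hq : q ∈ Icc (-1) 1) :
    branch f b '' uIcc p q = uIcc (branch f b p) (branch f b q) := by
  have hpb := hf.branch_mem b hp
  have hqb := hf.branch_mem b hq
  rw [hf.image_branch b (uIcc_subset_Icc hp hq)]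
  ext x
  refine ⟨fun ⟨hx, hfx⟩ => ?_, fun hx => ?_⟩
  · rwa [mem_preimage, ← hf.map_branch b hp, ← hf.map_branch b hq,
      hf.map_mem_uIcc_iff b hx hpb hqb] at hfx
  · have hxb : x ∈ half b := (ordConnected_half b).uIcc_subset hpb hqb hx
    refine ⟨hxb, ?_⟩
    rwa [mem_preimage, ← hf.map_branch b hp, ← hf.map_branch b hq,
      hf.map_mem_uIcc_iff b hxb hpb hqb]

lemma mapsTo_gw (w : List Bool) : MapsTo (gw f w) (Icc (-1) 1) (Icc (-1) 1) := by
  induction w with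
  | nil => exact mapsTo_id _
  | cons b w ih => exact fun y hy => half_subset b (hf.branch_mem b (ih hy))

lemma Iw_subset_Icc (w : List Bool) : Iw f w ⊆ Icc (-1) 1 :=
  (hf.mapsTo_gw w).image_subset

lemma Iw_eq_uIcc (w : List Bool) : Iw f w = uIcc (gw f w (-1)) (gw f w 1) := by
  induction w with
  | nil => simp [Iw, gw]
  | cons b w ih =>
    rw [Iw_cons, ih, hf.image_branch_uIcc b (hf.mapsTo_gw w (by norm_num))
      (hf.mapsTo_gw w (by norm_num))]
    rfl

lemma gw_neg_one_ne_gw_one (w : List Bool) : gw f w (-1) ≠ gw f w 1 := by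
  induction w with
  | nil => norm_num [gw]
  | cons b w ih =>
    exact fun h => ih (hf.injOn_branch b (hf.mapsTo_gw w (by norm_num))
      (hf.mapsTo_gw w (by norm_num)) h)

lemma len_Iw (w : List Bool) : len (Iw f w) = |gw f w 1 - gw f w (-1)| := by
  rw [hf.Iw_eq_uIcc, len_uIcc]

lemma len_Iw_pos (w : List Bool) : 0 < len (Iw f w) := by
  rw [hf.len_Iw]
  exact abs_pos.2 (sub_ne_zero.2 (hf.gw_neg_one_ne_gw_one w).symm)

lemma len_Iw_le_two (w : List Bool) : len (Iw f w) ≤ 2 := by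
  calc len (Iw f w) ≤ len (Icc (-1) 1) := len_mono (hf.Iw_subset_Icc w) subset_rfl
    _ = 2 := by rw [len, Real.volume_Icc]; norm_num

lemma Iw_subset_of_prefix {v w : List Bool} (h : v <+: w) : Iw f w ⊆ Iw f v := by
  obtain ⟨t, rfl⟩ := h
  rw [Iw, Iw, gw_append, image_comp]
  exact image_mono (hf.Iw_subset_Icc t)

lemma ratio_mem (a : ℕ → Bool) (n : ℕ) : ratio f a n ∈ Icc 0 1 := by
  have hsub := hf.Iw_subset_of_prefix (word a n).dropLast_prefix
  have hpos := hf.len_Iw_pos (word a n).dropLast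
  exact ⟨div_nonneg (hf.len_Iw_pos _).le hpos.le,
    (div_le_one hpos).2 (len_mono hsub (hf.Iw_subset_Icc _))⟩

variable {f' : ℝ → ℝ} {K α c : ℝ}

lemma map_le_one_of_mem_Iw_cons {b : Bool} {w : List Bool} {x : ℝ} (hx : x ∈ Iw f (b :: w)) :
    x ∈ Icc (-1) 1 ∧ f x ≤ 1 := by
  rw [Iw_cons] at hx
  obtain ⟨y, hy, rfl⟩ := hx
  have hy' := hf.Iw_subset_Icc w hy
  exact ⟨half_subset b (hf.branch_mem b hy'), (hf.map_branch b hy').symm ▸ hy'.2⟩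

/-- By the mean value theorem the two ratios differ by the factor `f' ξ / f' η`, with `ξ` and `η` in
the image interval `Iw f (b :: v)`. -/
lemma abs_len_div_sub_len_div_le
    (hd : ∀ x ∈ Icc (-1) 1, HasDerivWithinAt f (f' x) (Icc (-1) 1) x)
    (hH : ∀ x ∈ Icc (-1:ℝ) 1, ∀ y ∈ Icc (-1:ℝ) 1, |f' x - f' y| ≤ K * |x - y| ^ α)
    (hK : 0 ≤ K) (hα : 0 ≤ α) (hc : 0 < c)
    (hlow : ∀ x ∈ Icc (-1:ℝ) 1, f x ≤ 1 → c ≤ |f' x|) {v w : List Bool} (hvw : v <+: w)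
    (b : Bool) :
    |len (Iw f (b :: w)) / len (Iw f (b :: v)) - len (Iw f w) / len (Iw f v)| ≤
      K / c * len (Iw f (b :: v)) ^ α := by
  have hfgw : ∀ w y, y ∈ Icc (-1:ℝ) 1 → f (gw f (b :: w) y) = gw f w y :=
    fun w y hy => hf.map_branch b (hf.mapsTo_gw w hy)
  have hJI := hf.Iw_subset_of_prefix ((List.prefix_cons_inj b).2 hvw)
  have hreg : ∀ x ∈ Iw f (b :: v), x ∈ Icc (-1) 1 ∧ c ≤ |f' x| := fun x hx =>
    have h := hf.map_le_one_of_mem_Iw_cons hx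
    ⟨h.1, hlow x h.1 h.2⟩
  simp only [hf.Iw_eq_uIcc] at hJI hreg
  have hmem : ∀ {x}, x ∈ uIcc (gw f (b :: v) (-1)) (gw f (b :: v) 1) → x ∈ Icc (-1) 1 :=
    fun hx => (hreg _ hx).1
  obtain ⟨ξ, hξ, hfξ⟩ := exists_mem_uIcc_sub_eq_mul ordConnected_Icc hd
    (hmem (hJI left_mem_uIcc)) (hmem (hJI right_mem_uIcc))
  obtain ⟨η, hη, hfη⟩ := exists_mem_uIcc_sub_eq_mul ordConnected_Icc hd
    (hmem left_mem_uIcc) (hmem right_mem_uIcc)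
  rw [hfgw _ _ (by norm_num), hfgw _ _ (by norm_num)] at hfξ hfη
  have hB := hf.len_Iw_pos (b :: v)
  simp only [hf.len_Iw] at hB ⊢
  rw [hfξ, hfη, abs_mul, abs_mul]
  calc _ ≤ |f' η - f' ξ| / c :=
        abs_div_sub_abs_mul_div_le (abs_nonneg _) (abs_sub_le_of_uIcc_subset_uIcc hJI) hB hc
          (hreg η hη).2
    _ ≤ K * |gw f (b :: v) 1 - gw f (b :: v) (-1)| ^ α / c := by
        gcongr
        refine (hH η (hmem hη) ξ (hmem (hJI hξ))).trans (mul_le_mul_of_nonneg_left ?_ hK)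
        refine Real.rpow_le_rpow (abs_nonneg _) ?_ hα
        rw [abs_sub_comm _ (gw f (b :: v) (-1))]
        exact Real.dist_le_of_mem_uIcc hη (hJI hξ)
    _ = _ := by ring

lemma abs_ratio_succ_sub_ratio_le
    (hd : ∀ x ∈ Icc (-1) 1, HasDerivWithinAt f (f' x) (Icc (-1) 1) x)
    (hH : ∀ x ∈ Icc (-1:ℝ) 1, ∀ y ∈ Icc (-1:ℝ) 1, |f' x - f' y| ≤ K * |x - y| ^ α)
    (hK : 0 ≤ K) (hα : 0 ≤ α) (hc : 0 < c)
    (hlow : ∀ x ∈ Icc (-1:ℝ) 1, f x ≤ 1 → c ≤ |f' x|) (a : ℕ → Bool) (n : ℕ) :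
    |ratio f a (n + 1) - ratio f a n| ≤ K / c * len (Iw f (word a (n + 1)).dropLast) ^ α := by
  rw [ratio, ratio, dropLast_word_succ, word_succ]
  exact hf.abs_len_div_sub_len_div_le hd hH hK hα hc hlow (word a n).dropLast_prefix _

end IsUnimodal

namespace GoodFamily

variable (F : GoodFamily) {ε : ℝ}

lemma isUnimodal (hε : ε ∈ Icc 0 F.eps0) : IsUnimodal (F.f ε) where
  continuousOn := F.smooth.continuousOn.comp (Continuous.prodMk_right ε).continuousOn
    fun _ hx => ⟨hε, hx⟩
  strictMonoOn := F.mono ε hε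
  strictAntiOn := F.anti ε hε
  map_neg_one := F.map_neg_one ε hε
  map_one := F.map_one ε hε
  one_le_map_zero := by linarith [F.map_zero ε hε, hε.1]

lemma len_Iw_le (hε : ε ∈ Icc 0 F.eps0) {n : ℕ} {w : List Bool} (hw : w.length = n + 1) :
    len (Iw (F.f ε) w) ≤ max 2 F.C0 * F.lam ^ n := by
  rcases n.eq_zero_or_pos with rfl | hn
  · simpa using Or.inl ((F.isUnimodal hε).len_Iw_le_two w)
  · exact (F.decay ε hε n hn w hw).trans
      (mul_le_mul_of_nonneg_right (le_max_right _ _) (pow_nonneg F.lam_mem.1.le n))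

noncomputable def rate : ℝ := F.lam ^ F.alpha'

lemma rate_pos : 0 < F.rate := Real.rpow_pos_of_pos F.lam_mem.1 _

lemma rate_lt_one : F.rate < 1 :=
  Real.rpow_lt_one F.lam_mem.1.le F.lam_mem.2 F.alpha'_mem.1

noncomputable def stepConst (c : ℝ) : ℝ := F.K' / c * max 2 F.C0 ^ F.alpha'

lemma abs_ratio_succ_sub_ratio_le (hε : ε ∈ Icc 0 F.eps0) {c : ℝ} (hc : 0 < c)
    (hlow : ∀ x ∈ Icc (-1:ℝ) 1, F.f ε x ≤ 1 → c ≤ |F.f' ε x|) (a : ℕ → Bool) (n : ℕ) :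
    |ratio (F.f ε) a (n + 1) - ratio (F.f ε) a n| ≤ F.stepConst c * F.rate ^ n := by
  have hα := F.alpha'_mem.1.le
  refine ((F.isUnimodal hε).abs_ratio_succ_sub_ratio_le (F.deriv_f ε hε) (F.holder' ε hε)
    F.K'_pos.le hα hc hlow a n).trans ?_
  have hlen := F.len_Iw_le hε (n := n) (w := (word a (n + 1)).dropLast)
    (by simp [word_length])
  calc F.K' / c * len (Iw (F.f ε) (word a (n + 1)).dropLast) ^ F.alpha'
      ≤ F.K' / c * (max 2 F.C0 * F.lam ^ n) ^ F.alpha' := by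
        have := F.K'_pos
        gcongr
        exact ENNReal.toReal_nonneg
    _ = F.stepConst c * F.rate ^ n := by
        rw [Real.mul_rpow (by positivity) (pow_nonneg F.lam_mem.1.le n), rate, stepConst,
          Real.rpow_pow_comm F.lam_mem.1.le, mul_assoc]

noncomputable def scaling (ε : ℝ) (a : ℕ → Bool) : ℝ := limUnder atTop (ratio (F.f ε) a)

section LowerBound

variable {ε : ℝ} {c : ℝ} (hε : ε ∈ Icc 0 F.eps0) (hc : 0 < c)
  (hlow : ∀ x ∈ Icc (-1:ℝ) 1, F.f ε x ≤ 1 → c ≤ |F.f' ε x|)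
include hε hc hlow

lemma dist_ratio_ratio_succ_le (a : ℕ → Bool) (n : ℕ) :
    dist (ratio (F.f ε) a n) (ratio (F.f ε) a (n + 1)) ≤ F.stepConst c * F.rate ^ n := by
  rw [Real.dist_eq, abs_sub_comm]
  exact F.abs_ratio_succ_sub_ratio_le hε hc hlow a n

lemma tendsto_ratio_scaling (a : ℕ → Bool) :
    Tendsto (ratio (F.f ε) a) atTop (𝓝 (F.scaling ε a)) :=
  (cauchySeq_of_le_geometric _ _ F.rate_lt_one
    (F.dist_ratio_ratio_succ_le hε hc hlow a)).tendsto_limUnder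

lemma dist_ratio_scaling_le (a : ℕ → Bool) (n : ℕ) :
    dist (ratio (F.f ε) a n) (F.scaling ε a) ≤
      F.stepConst c / (1 - F.rate) * F.rate ^ n := by
  rw [div_mul_eq_mul_div]
  exact dist_le_of_le_geometric_of_tendsto _ _ F.rate_lt_one
    (F.dist_ratio_ratio_succ_le hε hc hlow a) (F.tendsto_ratio_scaling hε hc hlow a) n

end LowerBound

lemma exists_pos_le_abs_deriv_of_eq_div {H : Set ℝ} (hH : IsCompact H) (hHsub : H ⊆ Icc (-1) 1)
    {R : ℝ → ℝ → ℝ} (hRc : ContinuousOn (fun p : ℝ × ℝ => R p.1 p.2) (Icc 0 F.eps0 ×ˢ H))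
    (hR0 : ∀ ε ∈ Icc 0 F.eps0, ∀ x ∈ H, R ε x ≠ 0)
    (hR : ∀ ε ∈ Icc 0 F.eps0, ∀ x ∈ H, x ≠ 0 → R ε x = F.f' ε x / |x| ^ (F.gamma - 1))
    {δ : ℝ} (hδ : 0 < δ) :
    ∃ c > 0, ∀ ε ∈ Icc δ F.eps0, ∀ x ∈ H, F.f ε x ≤ 1 → c ≤ |F.f' ε x| := by
  set S := (Icc δ F.eps0 ×ˢ H) ∩ (fun p : ℝ × ℝ => F.f p.1 p.2) ⁻¹' Iic 1
  have hSR : S ⊆ Icc 0 F.eps0 ×ˢ H :=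
    inter_subset_left.trans (prod_mono (Icc_subset_Icc_left hδ.le) subset_rfl)
  have hS : IsCompact S := by
    refine (isCompact_Icc.prod hH).of_isClosed_subset ?_ inter_subset_left
    exact (F.smooth.continuousOn.mono (prod_mono (Icc_subset_Icc_left hδ.le) hHsub)
      ).preimage_isClosed_of_isClosed (isClosed_Icc.prod hH.isClosed) isClosed_Iic
  -- `f ε 0 = 1 + ε > 1`, so `S` stays away from the critical point
  have hx0 : ∀ p ∈ S, p.2 ≠ 0 := fun p hp h0 => by
    have hf0 := F.map_zero p.1 (hSR hp).1
    have : F.f p.1 p.2 ≤ 1 := hp.2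
    rw [h0, hf0] at this
    linarith [hp.1.1.1]
  have hγ : 0 ≤ F.gamma - 1 := by linarith [F.one_lt_gamma]
  obtain ⟨c, hc, hle⟩ := hS.exists_forall_le'
    (f := fun p : ℝ × ℝ => |R p.1 p.2| * |p.2| ^ (F.gamma - 1))
    ((hRc.mono hSR).abs.mul (continuous_snd.abs.rpow_const fun _ => Or.inr hγ).continuousOn)
    (a := 0) fun p hp => mul_pos (abs_pos.2 (hR0 _ (hSR hp).1 _ (hSR hp).2))
      (Real.rpow_pos_of_pos (abs_pos.2 (hx0 p hp)) _)
  refine ⟨c, hc, fun ε hε x hx hfx => ?_⟩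
  have hp : (ε, x) ∈ S := ⟨⟨hε, hx⟩, hfx⟩
  have hpow : 0 < |x| ^ (F.gamma - 1) := Real.rpow_pos_of_pos (abs_pos.2 (hx0 _ hp)) _
  have h := hle _ hp
  rwa [hR ε (hSR hp).1 x hx (hx0 _ hp), abs_div, abs_of_pos hpow,
    div_mul_cancel₀ _ hpow.ne'] at h

lemma exists_pos_le_abs_deriv {ε₁ : ℝ} (hε₁ : 0 < ε₁) :
    ∃ c > 0, ∀ᶠ ε in 𝓝 ε₁, ε ∈ Icc 0 F.eps0 →
      ∀ x ∈ Icc (-1:ℝ) 1, F.f ε x ≤ 1 → c ≤ |F.f' ε x| := by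
  obtain ⟨c₁, hc₁, h₁⟩ := F.exists_pos_le_abs_deriv_of_eq_div isCompact_Icc
    (Icc_subset_Icc_right zero_le_one) F.Rneg_cont F.Rneg_ne
    (fun ε hε x hx hx0 => F.Rneg_eq ε hε x ⟨hx.1, hx.2.lt_of_ne hx0⟩) (half_pos hε₁)
  obtain ⟨c₂, hc₂, h₂⟩ := F.exists_pos_le_abs_deriv_of_eq_div isCompact_Icc
    (Icc_subset_Icc_left (by norm_num)) F.Rpos_cont F.Rpos_ne
    (fun ε hε x hx hx0 => F.Rpos_eq ε hε x ⟨hx.1.lt_of_ne' hx0, hx.2⟩) (half_pos hε₁)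
  refine ⟨min c₁ c₂, lt_min hc₁ hc₂, ?_⟩
  filter_upwards [Ioi_mem_nhds (half_lt_self hε₁)] with ε hε hε' x hx hfx
  rcases le_total x 0 with h | h
  · exact (min_le_left _ _).trans (h₁ ε ⟨le_of_lt hε, hε'.2⟩ x ⟨hx.1, h⟩ hfx)
  · exact (min_le_right _ _).trans (h₂ ε ⟨le_of_lt hε, hε'.2⟩ x ⟨h, hx.2⟩ hfx)

lemma continuousOn_branch (b : Bool) :
    ContinuousOn (fun p : ℝ × ℝ => branch (F.f p.1) b p.2) (Icc 0 F.eps0 ×ˢ Icc (-1) 1) := by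
  have hinv := (isCompact_Icc.prod (isCompact_half b)).continuousOn_of_rightInvOn
    (Φ := fun p : ℝ × ℝ => (p.1, F.f p.1 p.2)) (g := fun p => (p.1, branch (F.f p.1) b p.2))
    (D := Icc 0 F.eps0 ×ˢ Icc (-1) 1)
    (continuousOn_fst.prodMk (F.smooth.continuousOn.mono (prod_mono subset_rfl (half_subset b))))
    (fun p hp q hq h => by
      obtain ⟨h1, h2⟩ := Prod.ext_iff.1 h
      refine Prod.ext h1 ((F.isUnimodal hp.1).injOn_half b hp.2 hq.2 ?_)
      simp only at h1 h2
      rw [h2, h1])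
    (fun p hp => ⟨hp.1, (F.isUnimodal hp.1).branch_mem b hp.2⟩)
    (fun p hp => Prod.ext rfl ((F.isUnimodal hp.1).map_branch b hp.2))
  exact continuous_snd.comp_continuousOn hinv

lemma continuousOn_gw (w : List Bool) {y : ℝ} (hy : y ∈ Icc (-1:ℝ) 1) :
    ContinuousOn (fun ε => gw (F.f ε) w y) (Icc 0 F.eps0) := by
  induction w with
  | nil => exact continuousOn_const
  | cons b w ih =>
    exact (F.continuousOn_branch b).comp (continuousOn_id.prodMk ih)
      fun ε hε => ⟨hε, (F.isUnimodal hε).mapsTo_gw w hy⟩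

lemma continuousOn_len_Iw (w : List Bool) :
    ContinuousOn (fun ε => len (Iw (F.f ε) w)) (Icc 0 F.eps0) :=
  ((F.continuousOn_gw w (by norm_num)).sub (F.continuousOn_gw w (by norm_num))).abs.congr
    fun ε hε => (F.isUnimodal hε).len_Iw w

lemma tendstoUniformly_ratio {ε₁ : ℝ} (hε₁ : ε₁ ∈ Icc 0 F.eps0) {s : Set ℝ}
    (hs : s ⊆ Icc 0 F.eps0) (n : ℕ) :
    TendstoUniformly (fun ε a => ratio (F.f ε) a n) (fun a => ratio (F.f ε₁) a n) (𝓝[s] ε₁) := by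
  rw [Metric.tendstoUniformly_iff]
  intro δ hδ
  have hcont : ∀ w : List Bool, ContinuousWithinAt
      (fun ε => len (Iw (F.f ε) w) / len (Iw (F.f ε) w.dropLast)) s ε₁ :=
    fun w => (((F.continuousOn_len_Iw w).div (F.continuousOn_len_Iw _)
      fun ε hε => ((F.isUnimodal hε).len_Iw_pos _).ne') ε₁ hε₁).mono hs
  filter_upwards [(List.finite_length_eq Bool (n + 1)).eventually_all.2
    fun w _ => Metric.tendsto_nhds.1 (hcont w) δ hδ] with ε hε a
  rw [dist_comm]
  exact hε (word a n) (word_length a n)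

end GoodFamily

lemma holderOnDual_of_dist_le {s : (ℕ → Bool) → ℝ} {r : (ℕ → Bool) → ℕ → ℝ} {C μ : ℝ}
    (hμ : μ ∈ Ioo (0:ℝ) 1) (hr : ∀ a n, r a n ∈ Icc (0:ℝ) 1)
    (hloc : ∀ a b n, (∀ k ≤ n, a k = b k) → r a n = r b n)
    (hrs : ∀ a n, dist (r a n) (s a) ≤ C * μ ^ n) : HolderOnDual s := by
  have hC : 0 ≤ C := by simpa using dist_nonneg.trans (hrs (fun _ => false) 0)
  have hsplit : ∀ a b m, |s a - s b| ≤ 2 * C * μ ^ m + |r a m - r b m| := fun a b m => by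
    have h := dist_triangle4 (s a) (r a m) (r b m) (s b)
    rw [dist_comm (s a) (r a m)] at h
    simp only [Real.dist_eq] at h hrs
    linarith [hrs a m, hrs b m]
  refine ⟨(2 * C + 1) / μ, by have := hμ.1; positivity, μ, hμ, fun a b n hab => ?_⟩
  cases n with
  | zero =>
    have h01 : |r a 0 - r b 0| ≤ 1 := by
      rw [abs_sub_le_iff]
      constructor <;> linarith [(hr a 0).1, (hr a 0).2, (hr b 0).1, (hr b 0).2]
    calc |s a - s b| ≤ 2 * C * μ ^ 0 + 1 := (hsplit a b 0).trans (by gcongr)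
      _ ≤ (2 * C + 1) / μ * μ ^ 0 := by
        rw [pow_zero, mul_one, mul_one, le_div_iff₀ hμ.1]
        nlinarith [hμ.2]
  | succ m =>
    have h := hsplit a b m
    rw [hloc a b m fun k hk => hab k (Nat.lt_succ_of_le hk), sub_self, abs_zero, add_zero] at h
    calc |s a - s b| ≤ 2 * C * μ ^ m := h
      _ ≤ (2 * C + 1) * μ ^ m := by have := hμ.1; gcongr; linarith
      _ = (2 * C + 1) / μ * μ ^ (m + 1) := by field_simp [hμ.1.ne']; ring

lemma tendstoUniformly_of_dist_le {ι X β : Type*} [PseudoMetricSpace β] {l : Filter ι}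
    {s : ι → X → β} {s₀ : X → β} {r : ι → X → ℕ → β} {r₀ : X → ℕ → β} {u : ℕ → ℝ}
    (hu : Tendsto u atTop (𝓝 0)) (hr : ∀ n, TendstoUniformly (fun i x => r i x n) (r₀ · n) l)
    (hrs : ∀ᶠ i in l, ∀ x n, dist (r i x n) (s i x) ≤ u n)
    (hrs₀ : ∀ x n, dist (r₀ x n) (s₀ x) ≤ u n) : TendstoUniformly s s₀ l := by
  rw [Metric.tendstoUniformly_iff]
  intro δ hδ
  obtain ⟨N, hN⟩ := (hu.eventually (gt_mem_nhds (by positivity : 0 < δ / 3))).exists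
  filter_upwards [hrs, Metric.tendstoUniformly_iff.1 (hr N) (δ / 3) (by positivity)]
    with i hi hri x
  calc dist (s₀ x) (s i x)
      ≤ dist (s₀ x) (r₀ x N) + dist (r₀ x N) (r i x N) + dist (r i x N) (s i x) :=
        dist_triangle4 _ _ _ _
    _ < δ := by linarith [dist_comm (s₀ x) (r₀ x N), hrs₀ x N, hri x, hi x N]

/-- Theorem A, existence, Hölder continuity and continuity in ε of scaling
functions: for a good family, for every `0 < ε ≤ ε₀` the scaling function `s_ε` of `f_ε`
exists and is Hölder continuous on the dual Cantor set, and `s_ε → s_{ε₁}` uniformly as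
`ε → ε₁` within `(0, ε₀]`. -/
theorem scaling_functions_exist_and_vary_continuously (F : GoodFamily) :
    ∃ s : ℝ → (ℕ → Bool) → ℝ,
      (∀ ε ∈ Ioc 0 F.eps0, IsScalingFun (F.f ε) (s ε) ∧ HolderOnDual (s ε)) ∧
      (∀ ε₁ ∈ Ioc 0 F.eps0,
        TendstoUniformly s (s ε₁) (nhdsWithin ε₁ (Ioc 0 F.eps0))) := by
  refine ⟨F.scaling, fun ε hε => ?_, fun ε₁ hε₁ => ?_⟩
  · have hε' := Ioc_subset_Icc_self hε
    obtain ⟨c, hc, hlow⟩ := F.exists_pos_le_abs_deriv hε.1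
    have hlow := hlow.self_of_nhds hε'
    exact ⟨F.tendsto_ratio_scaling hε' hc hlow,
      holderOnDual_of_dist_le ⟨F.rate_pos, F.rate_lt_one⟩ (F.isUnimodal hε').ratio_mem
        (fun _ _ _ => ratio_congr _) (F.dist_ratio_scaling_le hε' hc hlow)⟩
  · have hε₁' := Ioc_subset_Icc_self hε₁
    obtain ⟨c, hc, hlow⟩ := F.exists_pos_le_abs_deriv hε₁.1
    refine tendstoUniformly_of_dist_le ?_ (F.tendstoUniformly_ratio hε₁' Ioc_subset_Icc_self) ?_
      (F.dist_ratio_scaling_le hε₁' hc (hlow.self_of_nhds hε₁'))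
    · simpa using (tendsto_pow_atTop_nhds_zero_of_lt_one F.rate_pos.le F.rate_lt_one).const_mul
        (F.stepConst c / (1 - F.rate))
    · filter_upwards [nhdsWithin_le_nhds hlow, self_mem_nhdsWithin] with ε hlowε hε
      exact F.dist_ratio_scaling_le (Ioc_subset_Icc_self hε) hc (hlowε (Ioc_subset_Icc_self hε))
end

section
/- Let ε > 0 and let f : [-1,1] → ℝ be continuous, strictly increasing on [-1,0], strictly decreasing on [0,1], with f(0) = 1+ε and f(−1) = f(1) = −1, and suppose the maximal lengths λₙ of the partitions determined by f tend to 0 as n → ∞. Let Λ = {x ∈ [-1,1] : fⁿ(x) ∈ [-1,1] for all n ≥ 0} be the maximal invariant set, and let (𝒞, σ) be the one-sided full shift on two symbols, where 𝒞 = {0,1}^ℕ with the product topology and σ is the shift map. Then there is a homeomorphism h from 𝒞 onto Λ such that h ∘ σ = f ∘ h; that is, (Λ, f) and (𝒞, σ) are topologically conjugate. -/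
open Set MeasureTheory Filter Topology

namespace Conj14

def J : Bool → Set ℝ
  | false => Icc (-1) 0
  | true => Icc 0 1

lemma J_subset (b : Bool) : J b ⊆ Icc (-1:ℝ) 1 := by
  cases b
  · exact Icc_subset_Icc le_rfl (by norm_num)
  · exact Icc_subset_Icc (by norm_num) le_rfl

lemma J_ordConnected (b : Bool) : (J b).OrdConnected := by
  cases b <;> exact ordConnected_Icc

structure Hyp (f : ℝ → ℝ) (ε : ℝ) : Prop where
  pos : 0 < ε
  cont : ContinuousOn f (Icc (-1) 1)
  mono : StrictMonoOn f (Icc (-1) 0)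
  anti : StrictAntiOn f (Icc 0 1)
  f0 : f 0 = 1 + ε
  fm1 : f (-1) = -1
  f1 : f 1 = -1

variable {f : ℝ → ℝ} {ε : ℝ}

lemma Hyp.surj (H : Hyp f ε) (b : Bool) {y : ℝ} (hy : y ∈ Icc (-1:ℝ) 1) :
    ∃ x ∈ J b, f x = y := by
  cases b
  · have hsub : Icc (f (-1)) (f 0) ⊆ f '' Icc (-1) 0 :=
      intermediate_value_Icc (by norm_num) (H.cont.mono (Icc_subset_Icc le_rfl (by norm_num)))
    have hyy : y ∈ Icc (f (-1)) (f 0) := by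
      rw [H.fm1, H.f0]; exact ⟨hy.1, by linarith [hy.2, H.pos]⟩
    obtain ⟨x, hx, hfx⟩ := hsub hyy
    exact ⟨x, hx, hfx⟩
  · have hsub : Icc (f 1) (f 0) ⊆ f '' Icc 0 1 :=
      intermediate_value_Icc' (by norm_num) (H.cont.mono (Icc_subset_Icc (by norm_num) le_rfl))
    have hyy : y ∈ Icc (f 1) (f 0) := by
      rw [H.f1, H.f0]; exact ⟨hy.1, by linarith [hy.2, H.pos]⟩
    obtain ⟨x, hx, hfx⟩ := hsub hyy
    exact ⟨x, hx, hfx⟩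

lemma Hyp.injJ (H : Hyp f ε) (b : Bool) : Set.InjOn f (J b) := by
  cases b
  · exact H.mono.injOn
  · exact H.anti.injOn

lemma Hyp.branch_spec (H : Hyp f ε) (b : Bool) {y : ℝ} (hy : y ∈ Icc (-1:ℝ) 1) :
    branch f b y ∈ J b ∧ f (branch f b y) = y := by
  have hex := H.surj b hy
  cases b
  · exact ⟨Function.invFunOn_mem hex, Function.invFunOn_eq hex⟩
  · exact ⟨Function.invFunOn_mem hex, Function.invFunOn_eq hex⟩

lemma branch_image (H : Hyp f ε) (b : Bool) {S : Set ℝ} (hS : S ⊆ Icc (-1) 1) :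
    branch f b '' S = J b ∩ f ⁻¹' S := by
  apply Set.Subset.antisymm
  · rintro _ ⟨y, hy, rfl⟩
    obtain ⟨h1, h2⟩ := H.branch_spec b (hS hy)
    refine ⟨h1, ?_⟩
    rw [Set.mem_preimage, h2]; exact hy
  · rintro x ⟨hxJ, hxS⟩
    have hfx : f x ∈ Icc (-1:ℝ) 1 := hS hxS
    obtain ⟨h1, h2⟩ := H.branch_spec b hfx
    have heq : branch f b (f x) = x := H.injJ b h1 hxJ h2
    exact ⟨f x, hxS, heq⟩

def Cyl (f : ℝ → ℝ) (a : ℕ → Bool) (n : ℕ) : Set ℝ :=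
  {x | (∀ k ≤ n, f^[k] x ∈ J (a k)) ∧ f^[n+1] x ∈ Icc (-1) 1}

lemma cyl_zero (a : ℕ → Bool) : Cyl f a 0 = J (a 0) ∩ f ⁻¹' (Icc (-1) 1) := by
  ext x
  simp only [Cyl, Set.mem_setOf_eq, Set.mem_inter_iff, Set.mem_preimage, Nat.le_zero,
    forall_eq, Function.iterate_zero, Function.iterate_one, id_eq, zero_add]

lemma cyl_succ (a : ℕ → Bool) (n : ℕ) :
    Cyl f a (n+1) = J (a 0) ∩ f ⁻¹' (Cyl f (fun k => a (k+1)) n) := by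
  ext x
  simp only [Cyl, Set.mem_setOf_eq, Set.mem_inter_iff, Set.mem_preimage]
  constructor
  · rintro ⟨h1, h2⟩
    refine ⟨by simpa using h1 0 (Nat.zero_le _), fun k hk => ?_, ?_⟩
    · rw [← Function.iterate_succ_apply]; exact h1 (k+1) (by omega)
    · rw [← Function.iterate_succ_apply]; exact h2
  · rintro ⟨h0, h1, h2⟩
    refine ⟨fun k hk => ?_, by rw [Function.iterate_succ_apply]; exact h2⟩
    cases k with
    | zero => simpa using h0
    | succ j => rw [Function.iterate_succ_apply]; exact h1 j (by omega)

lemma cyl_subset (a : ℕ → Bool) (n : ℕ) : Cyl f a n ⊆ Icc (-1) 1 := by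
  intro x hx
  have h0 := hx.1 0 (Nat.zero_le n)
  simp only [Function.iterate_zero, id_eq] at h0
  exact J_subset (a 0) h0

lemma aux_closed (H : Hyp f ε) (b : Bool) {S : Set ℝ} (hScl : IsClosed S) :
    IsClosed (J b ∩ f ⁻¹' S) := by
  refine (H.cont.mono (J_subset b)).preimage_isClosed_of_isClosed ?_ hScl
  cases b <;> exact isClosed_Icc

lemma aux_nonempty (H : Hyp f ε) (b : Bool) {S : Set ℝ} (hSne : S.Nonempty)
    (hS : S ⊆ Icc (-1) 1) : (J b ∩ f ⁻¹' S).Nonempty := by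
  obtain ⟨y, hy⟩ := hSne
  obtain ⟨x, hx, hfx⟩ := H.surj b (hS hy)
  exact ⟨x, hx, by rw [Set.mem_preimage, hfx]; exact hy⟩

lemma aux_ord (H : Hyp f ε) (b : Bool) {S : Set ℝ} (hS : S.OrdConnected) :
    (J b ∩ f ⁻¹' S).OrdConnected := by
  refine ⟨fun x hx z hz y hy => ?_⟩
  obtain ⟨hxJ, hxS⟩ := hx
  obtain ⟨hzJ, hzS⟩ := hz
  have hyJ : y ∈ J b := (J_ordConnected b).out hxJ hzJ hy
  refine ⟨hyJ, ?_⟩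
  have hmem : f y ∈ uIcc (f x) (f z) := by
    cases b
    · have h1 : f x ≤ f y := H.mono.monotoneOn hxJ hyJ hy.1
      have h2 : f y ≤ f z := H.mono.monotoneOn hyJ hzJ hy.2
      exact Icc_subset_uIcc ⟨h1, h2⟩
    · have h1 : f z ≤ f y := H.anti.antitoneOn hyJ hzJ hy.2
      have h2 : f y ≤ f x := H.anti.antitoneOn hxJ hyJ hy.1
      exact Icc_subset_uIcc' ⟨h1, h2⟩
  exact hS.uIcc_subset hxS hzS hmem

lemma cyl_closed (H : Hyp f ε) : ∀ (n : ℕ) (a : ℕ → Bool), IsClosed (Cyl f a n)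
  | 0, a => by rw [cyl_zero]; exact aux_closed H _ isClosed_Icc
  | n+1, a => by rw [cyl_succ]; exact aux_closed H _ (cyl_closed H n _)

lemma cyl_nonempty (H : Hyp f ε) : ∀ (n : ℕ) (a : ℕ → Bool), (Cyl f a n).Nonempty
  | 0, a => by
    rw [cyl_zero]
    exact aux_nonempty H _ ⟨0, by norm_num⟩ Set.Subset.rfl
  | n+1, a => by
    rw [cyl_succ]
    exact aux_nonempty H _ (cyl_nonempty H n _) (cyl_subset _ _)

lemma cyl_ord (H : Hyp f ε) : ∀ (n : ℕ) (a : ℕ → Bool), (Cyl f a n).OrdConnected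
  | 0, a => by rw [cyl_zero]; exact aux_ord H _ ordConnected_Icc
  | n+1, a => by rw [cyl_succ]; exact aux_ord H _ (cyl_ord H n _)

lemma cyl_antitone (a : ℕ → Bool) {m n : ℕ} (h : m ≤ n) : Cyl f a n ⊆ Cyl f a m := by
  intro x hx
  refine ⟨fun k hk => hx.1 k (hk.trans h), ?_⟩
  rcases eq_or_lt_of_le h with rfl | hlt
  · exact hx.2
  · exact J_subset _ (hx.1 (m+1) (by omega))

lemma cyl_congr {a b : ℕ → Bool} {n : ℕ} (hab : ∀ k ≤ n, a k = b k) :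
    Cyl f a n = Cyl f b n := by
  ext x
  simp only [Cyl, Set.mem_setOf_eq]
  constructor <;> rintro ⟨h1, h2⟩ <;> refine ⟨fun k hk => ?_, h2⟩
  · rw [← hab k hk]; exact h1 k hk
  · rw [hab k hk]; exact h1 k hk

lemma iw_eq (H : Hyp f ε) : ∀ (n : ℕ) (a : ℕ → Bool),
    Iw f ((List.range (n+1)).map a) = Cyl f a n
  | 0, a => by
    have hl : (List.range 1).map a = [a 0] := rfl
    rw [hl, Iw]
    have hg : gw f [a 0] = branch f (a 0) := rfl
    rw [hg, branch_image H _ Set.Subset.rfl, cyl_zero]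
  | n+1, a => by
    have hl : (List.range (n+2)).map a
        = a 0 :: (List.range (n+1)).map (fun k => a (k+1)) := by
      rw [List.range_succ_eq_map]
      simp [List.map_map, Function.comp]
    rw [Iw, hl]
    have hg : gw f (a 0 :: (List.range (n+1)).map (fun k => a (k+1)))
        = branch f (a 0) ∘ gw f ((List.range (n+1)).map (fun k => a (k+1))) := rfl
    rw [hg, Set.image_comp]
    have hin : gw f ((List.range (n+1)).map (fun k => a (k+1))) '' Icc (-1) 1
        = Cyl f (fun k => a (k+1)) n := iw_eq H n _
    rw [hin, branch_image H _ (cyl_subset _ _), cyl_succ]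

lemma dist_le_len (H : Hyp f ε) {a : ℕ → Bool} {n : ℕ} {x y : ℝ}
    (hx : x ∈ Cyl f a n) (hy : y ∈ Cyl f a n) : |x - y| ≤ len (Cyl f a n) := by
  wlog hxy : y ≤ x generalizing x y
  · rw [abs_sub_comm]; exact this hy hx (le_of_not_ge hxy)
  have hsub : Icc y x ⊆ Cyl f a n := (cyl_ord H n a).out hy hx
  have h1 : volume (Icc y x) ≤ volume (Cyl f a n) := measure_mono hsub
  have h2 : volume (Cyl f a n) ≤ volume (Icc (-1:ℝ) 1) := measure_mono (cyl_subset a n)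
  have hfin : volume (Cyl f a n) ≠ ⊤ := (lt_of_le_of_lt h2 measure_Icc_lt_top).ne
  have h3 : (volume (Icc y x)).toReal ≤ len (Cyl f a n) := ENNReal.toReal_mono hfin h1
  rw [Real.volume_Icc, ENNReal.toReal_ofReal (by linarith)] at h3
  rw [abs_of_nonneg (sub_nonneg.2 hxy)]
  linarith

end Conj14

/-- Lemma 5: if `f` has the standard hyperbolic shape with `f(0) = 1+ε`
(`ε > 0`) and the maximal lengths of the partitions determined by `f` tend to `0`, then the
maximal invariant set `Λ` of `f` with the restriction of `f` is topologically conjugate to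
the one-sided full shift `σ` on two symbols. -/
theorem conjugacy_to_full_shift (ε : ℝ) (hε : 0 < ε) (f : ℝ → ℝ)
    (hcont : ContinuousOn f (Icc (-1) 1))
    (hmono : StrictMonoOn f (Icc (-1) 0)) (hanti : StrictAntiOn f (Icc 0 1))
    (hf0 : f 0 = 1 + ε) (hfm1 : f (-1) = -1) (hf1 : f 1 = -1)
    (hdecay : ∀ δ > (0:ℝ), ∃ N : ℕ, ∀ n ≥ N, ∀ w : List Bool, w.length = n + 1 →
      len (Iw f w) < δ) :
    ∃ h : (ℕ → Bool) → ℝ, Continuous h ∧ Function.Injective h ∧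
      Set.range h = Lambda f ∧
      ∀ a : ℕ → Bool, h (fun n => a (n + 1)) = f (h a) := by
  have H : Conj14.Hyp f ε := ⟨hε, hcont, hmono, hanti, hf0, hfm1, hf1⟩
  have hsmall : ∀ (a : ℕ → Bool) (δ : ℝ), 0 < δ → ∃ N, len (Conj14.Cyl f a N) < δ := by
    intro a δ hδ
    obtain ⟨N, hN⟩ := hdecay δ hδ
    refine ⟨N, ?_⟩
    have hlen := hN N le_rfl ((List.range (N+1)).map a) (by simp)
    rwa [Conj14.iw_eq H] at hlen
  have hne : ∀ a : ℕ → Bool, (⋂ n, Conj14.Cyl f a n).Nonempty := by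
    intro a
    apply IsCompact.nonempty_iInter_of_sequence_nonempty_isCompact_isClosed
    · intro n; exact Conj14.cyl_antitone a (Nat.le_succ n)
    · intro n; exact Conj14.cyl_nonempty H n a
    · exact isCompact_Icc.of_isClosed_subset (Conj14.cyl_closed H 0 a) (Conj14.cyl_subset a 0)
    · intro n; exact Conj14.cyl_closed H n a
  set h : (ℕ → Bool) → ℝ := fun a => (hne a).choose with hh
  have hmem : ∀ (a : ℕ → Bool) (n : ℕ), h a ∈ Conj14.Cyl f a n := fun a n =>
    Set.mem_iInter.1 (hne a).choose_spec n
  have huniq : ∀ (a : ℕ → Bool) (x y : ℝ), (∀ n, x ∈ Conj14.Cyl f a n) →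
      (∀ n, y ∈ Conj14.Cyl f a n) → x = y := by
    intro a x y hx hy
    by_contra hxy
    have habs : 0 < |x - y| := abs_pos.2 (sub_ne_zero.2 hxy)
    obtain ⟨N, hN⟩ := hsmall a _ habs
    exact absurd (Conj14.dist_le_len H (hx N) (hy N)) (not_le.2 hN)
  refine ⟨h, ?_, ?_, ?_, ?_⟩
  · rw [continuous_iff_continuousAt]
    intro a
    rw [ContinuousAt, Metric.tendsto_nhds]
    intro δ hδ
    obtain ⟨N, hN⟩ := hsmall a δ hδ
    have hev : ∀ᶠ b in nhds a, ∀ k ≤ N, b k = a k := by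
      have hone : ∀ k : ℕ, ∀ᶠ b : ℕ → Bool in nhds a, b k = a k := by
        intro k
        have ht : Filter.Tendsto (fun b : ℕ → Bool => b k) (nhds a) (nhds (a k)) :=
          (continuous_apply k).tendsto a
        have := ht.eventually (eventually_of_mem
          ((isOpen_discrete ({a k} : Set Bool)).mem_nhds rfl) (fun x hx => hx))
        exact this.mono (fun b hb => hb)
      have hfin : ∀ᶠ b : ℕ → Bool in nhds a, ∀ k ∈ Finset.range (N+1), b k = a k :=
        (Filter.eventually_all_finset _).2 (fun k _ => hone k)
      exact hfin.mono (fun b hb k hk => hb k (Finset.mem_range.2 (by omega)))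
    filter_upwards [hev] with b hb
    have hcyl : Conj14.Cyl f b N = Conj14.Cyl f a N := Conj14.cyl_congr hb
    have h1 : h b ∈ Conj14.Cyl f a N := hcyl ▸ hmem b N
    have h2 := Conj14.dist_le_len H h1 (hmem a N)
    rw [Real.dist_eq]
    linarith
  · intro a b hab
    by_contra hne'
    obtain ⟨k, hk⟩ := Function.ne_iff.1 hne'
    have hxa : f^[k] (h a) ∈ Conj14.J (a k) := (hmem a k).1 k le_rfl
    have hxb : f^[k] (h b) ∈ Conj14.J (b k) := (hmem b k).1 k le_rfl
    rw [← hab] at hxb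
    have hzero : f^[k] (h a) = 0 := by
      cases ha : a k <;> cases hbk : b k <;> rw [ha] at hxa <;> rw [hbk] at hxb
      · exact absurd (ha.trans hbk.symm) hk
      · exact le_antisymm hxa.2 hxb.1
      · exact le_antisymm hxb.2 hxa.1
      · exact absurd (ha.trans hbk.symm) hk
    have h2 : f^[k+1] (h a) ∈ Icc (-1:ℝ) 1 :=
      Conj14.J_subset _ ((hmem a (k+1)).1 (k+1) le_rfl)
    rw [Function.iterate_succ_apply', hzero, hf0] at h2
    linarith [h2.2]
  · ext x
    constructor
    · rintro ⟨a, rfl⟩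
      intro n
      exact Conj14.J_subset _ ((hmem a n).1 n le_rfl)
    · intro hx
      have hx' : ∀ n : ℕ, f^[n] x ∈ Icc (-1:ℝ) 1 := hx
      set a : ℕ → Bool := fun n => decide (0 < f^[n] x) with ha
      have hxc : ∀ n, x ∈ Conj14.Cyl f a n := by
        intro n
        refine ⟨fun k _ => ?_, hx' (n+1)⟩
        by_cases h0 : 0 < f^[k] x
        · have hak : a k = true := by simp [ha, h0]
          rw [hak]
          exact ⟨le_of_lt h0, (hx' k).2⟩
        · have hak : a k = false := by simp [ha, h0]
          rw [hak]
          exact ⟨(hx' k).1, le_of_not_gt h0⟩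
      exact ⟨a, huniq a _ _ (fun n => hmem a n) hxc⟩
  · intro a
    apply huniq (fun n => a (n+1)) _ _ (fun n => hmem _ n)
    intro n
    have hs := hmem a (n+1)
    rw [Conj14.cyl_succ] at hs
    exact hs.2
end

section
/- (C³ Koebe distortion lemma.) Let I and J be intervals and let g : I → J be a C³ diffeomorphism whose Schwarzian derivative S(g) = g'''/g' − (3/2)(g''/g')² is nonnegative on I. Then the nonlinearity n(g) = g''/g' satisfies |n(g)(x)| ≤ 2/d_I(x) for every x in the interior of I, where d_I(x) is the distance from x to the boundary of I. -/
/-!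
With `n = g''/g'` one has `n' = g'''/g' - n² = S(g) + n²/2`, so `S(g) ≥ 0` gives the Riccati
inequality `n' ≥ n²/2`. Hence `n` is nondecreasing and, where `n ≠ 0`, `(1/n)' ≤ -1/2`.
If `n(x) > 0`, then `n > 0` on `[x, b]`, and integrating `(1/n)' ≤ -1/2` over `[x, b]` gives
`(b - x)/2 ≤ 1/n(x) - 1/n(b) < 1/n(x)`; symmetrically on `[a, x]` when `n(x) < 0`.
-/

open Set

section Riccati

variable {s : Set ℝ} {f f' : ℝ → ℝ}

lemma monotoneOn_of_sq_half_le_deriv (hs : Convex ℝ s)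
    (hf : ∀ t ∈ s, HasDerivWithinAt f (f' t) s t) (hric : ∀ t ∈ s, f t ^ 2 / 2 ≤ f' t) :
    MonotoneOn f s :=
  monotoneOn_of_hasDerivWithinAt_nonneg hs (fun t ht => (hf t ht).continuousWithinAt)
    (fun t ht => (hf t (interior_subset ht)).mono interior_subset)
    (fun t ht => (by positivity : 0 ≤ f t ^ 2 / 2).trans (hric t (interior_subset ht)))

lemma antitoneOn_inv_add_half_of_sq_half_le_deriv (hs : Convex ℝ s)
    (hf : ∀ t ∈ s, HasDerivWithinAt f (f' t) s t) (hric : ∀ t ∈ s, f t ^ 2 / 2 ≤ f' t)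
    (hf0 : ∀ t ∈ s, f t ≠ 0) :
    AntitoneOn (fun t => (f t)⁻¹ + t / 2) s := by
  have hcont : ContinuousOn f s := fun t ht => (hf t ht).continuousWithinAt
  refine antitoneOn_of_hasDerivWithinAt_nonpos hs
    ((hcont.inv₀ hf0).add (continuous_id.div_const 2).continuousOn)
    (fun t ht => (((hf t (interior_subset ht)).mono interior_subset).inv
      (hf0 t (interior_subset ht))).add ((hasDerivWithinAt_id t _).div_const 2)) ?_
  intro t ht
  have hsq : 0 < f t ^ 2 := pow_two_pos_of_ne_zero (hf0 t (interior_subset ht))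
  have : 1 / 2 ≤ f' t / f t ^ 2 := by
    rw [le_div_iff₀ hsq]
    linarith [hric t (interior_subset ht)]
  rw [neg_div]
  linarith

lemma le_two_div_of_half_le_inv {u δ : ℝ} (hu : 0 < u) (hδ : 0 < δ) (h : δ / 2 ≤ u⁻¹) :
    u ≤ 2 / δ := by
  rw [← inv_div]
  exact (le_inv_comm₀ (by positivity) hu).1 h

lemma le_two_div_sub_of_sq_half_le_deriv {c d : ℝ} (hcd : c < d)
    (hf : ∀ t ∈ Icc c d, HasDerivWithinAt f (f' t) (Icc c d) t)
    (hric : ∀ t ∈ Icc c d, f t ^ 2 / 2 ≤ f' t) :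
    f c ≤ 2 / (d - c) := by
  have hδ : 0 < d - c := sub_pos.2 hcd
  rcases le_or_gt (f c) 0 with hc | hc
  · exact hc.trans (by positivity)
  have hpos : ∀ t ∈ Icc c d, 0 < f t := fun t ht =>
    hc.trans_le (monotoneOn_of_sq_half_le_deriv (convex_Icc c d) hf hric
      (left_mem_Icc.2 hcd.le) ht ht.1)
  have hanti := antitoneOn_inv_add_half_of_sq_half_le_deriv (convex_Icc c d) hf hric
    (fun t ht => (hpos t ht).ne') (left_mem_Icc.2 hcd.le) (right_mem_Icc.2 hcd.le) hcd.le
  have hd := inv_pos.2 (hpos d (right_mem_Icc.2 hcd.le))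
  exact le_two_div_of_half_le_inv hc hδ (by dsimp only at hanti; linarith)

lemma neg_le_two_div_sub_of_sq_half_le_deriv {c d : ℝ} (hcd : c < d)
    (hf : ∀ t ∈ Icc c d, HasDerivWithinAt f (f' t) (Icc c d) t)
    (hric : ∀ t ∈ Icc c d, f t ^ 2 / 2 ≤ f' t) :
    -f d ≤ 2 / (d - c) := by
  have hδ : 0 < d - c := sub_pos.2 hcd
  rcases le_or_gt 0 (f d) with hd | hd
  · exact (neg_nonpos.2 hd).trans (by positivity)
  have hneg : ∀ t ∈ Icc c d, f t < 0 := fun t ht =>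
    (monotoneOn_of_sq_half_le_deriv (convex_Icc c d) hf hric ht
      (right_mem_Icc.2 hcd.le) ht.2).trans_lt hd
  have hanti := antitoneOn_inv_add_half_of_sq_half_le_deriv (convex_Icc c d) hf hric
    (fun t ht => (hneg t ht).ne) (left_mem_Icc.2 hcd.le) (right_mem_Icc.2 hcd.le) hcd.le
  have hc := inv_lt_zero.2 (hneg c (left_mem_Icc.2 hcd.le))
  refine le_two_div_of_half_le_inv (neg_pos.2 hd) hδ ?_
  dsimp only at hanti
  rw [inv_neg]
  linarith

lemma abs_le_two_div_min_of_sq_half_le_deriv {a b x : ℝ}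
    (hf : ∀ t ∈ Icc a b, HasDerivWithinAt f (f' t) (Icc a b) t)
    (hric : ∀ t ∈ Icc a b, f t ^ 2 / 2 ≤ f' t) (hx : x ∈ Ioo a b) :
    |f x| ≤ 2 / min (x - a) (b - x) := by
  have restrict : ∀ {c d}, Icc c d ⊆ Icc a b →
      ∀ t ∈ Icc c d, HasDerivWithinAt f (f' t) (Icc c d) t :=
    fun hsub t ht => (hf t (hsub ht)).mono hsub
  have hright := le_two_div_sub_of_sq_half_le_deriv hx.2
    (restrict (Icc_subset_Icc hx.1.le le_rfl)) (fun t ht => hric t ⟨hx.1.le.trans ht.1, ht.2⟩)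
  have hleft := neg_le_two_div_sub_of_sq_half_le_deriv hx.1
    (restrict (Icc_subset_Icc le_rfl hx.2.le)) (fun t ht => hric t ⟨ht.1, ht.2.trans hx.2.le⟩)
  have hmin : 0 < min (x - a) (b - x) := lt_min (sub_pos.2 hx.1) (sub_pos.2 hx.2)
  rw [abs_le]
  constructor
  · linarith [div_le_div_of_nonneg_left zero_le_two hmin (min_le_left (x - a) (b - x))]
  · linarith [div_le_div_of_nonneg_left zero_le_two hmin (min_le_right (x - a) (b - x))]

end Riccati

lemma hasDerivWithinAt_nonlinearity {s : Set ℝ} {x : ℝ} {g' g'' g''' : ℝ → ℝ}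
    (hd2 : HasDerivWithinAt g' (g'' x) s x) (hd3 : HasDerivWithinAt g'' (g''' x) s x)
    (hne : g' x ≠ 0) :
    HasDerivWithinAt (fun t => g'' t / g' t) (g''' x / g' x - (g'' x / g' x) ^ 2) s x :=
  (hd3.div hd2 hne).congr_deriv (by field_simp)

theorem koebe_distortion_C3_general (a b : ℝ) (g' g'' g''' : ℝ → ℝ)
    (hd2 : ∀ x ∈ Icc a b, HasDerivWithinAt g' (g'' x) (Icc a b) x)
    (hd3 : ∀ x ∈ Icc a b, HasDerivWithinAt g'' (g''' x) (Icc a b) x)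
    (hne : ∀ x ∈ Icc a b, g' x ≠ 0)
    (hschwarz : ∀ x ∈ Icc a b, 0 ≤ g''' x / g' x - (3 / 2) * (g'' x / g' x) ^ 2) :
    ∀ x ∈ Ioo a b, |g'' x / g' x| ≤ 2 / min (x - a) (b - x) := fun _ hx =>
  abs_le_two_div_min_of_sq_half_le_deriv (f := fun t => g'' t / g' t)
    (fun t ht => hasDerivWithinAt_nonlinearity (hd2 t ht) (hd3 t ht) (hne t ht))
    (fun t ht => by linarith [hschwarz t ht]) hx

/-- Lemma 10, the C³ Koebe distortion lemma: if `g` is a C³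
diffeomorphism of the interval `I = [a,b]` with nonnegative Schwarzian derivative, then its
nonlinearity `n(g) = g''/g'` satisfies `|n(g)(x)| ≤ 2/d_I(x)` for every interior point `x`,
where `d_I(x) = min (x - a) (b - x)` is the distance from `x` to the boundary of `I`. -/
theorem koebe_distortion_C3 (a b : ℝ) (hab : a < b) (g g' g'' g''' : ℝ → ℝ)
    (hd1 : ∀ x ∈ Icc a b, HasDerivWithinAt g (g' x) (Icc a b) x)
    (hd2 : ∀ x ∈ Icc a b, HasDerivWithinAt g' (g'' x) (Icc a b) x)
    (hd3 : ∀ x ∈ Icc a b, HasDerivWithinAt g'' (g''' x) (Icc a b) x)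
    (hcont3 : ContinuousOn g''' (Icc a b))
    (hne : ∀ x ∈ Icc a b, g' x ≠ 0)
    (hinj : Set.InjOn g (Icc a b))
    (hschwarz : ∀ x ∈ Icc a b, 0 ≤ g''' x / g' x - (3 / 2) * (g'' x / g' x) ^ 2) :
    ∀ x ∈ Ioo a b, |g'' x / g' x| ≤ 2 / min (x - a) (b - x) :=
  koebe_distortion_C3_general a b g' g'' g''' hd2 hd3 hne hschwarz
end
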